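/- Sphere-packing bound: if r divides n and C ⊆ S_n is a single-error correcting r-regular multipermutation code under the r-regular Ulam metric (i.e., spheres of radius 1 around distinct codeword multipermutations are disjoint, and C is a union of ≡_r equivalence classes), then the number of distinct codeword multipermutations satisfies |C|_r ≤ n! / ((r!)^{n/r} · (1 + (n−1)(n/r − 1))). -/

import Mathlib

namespace UlamPaper

/-- Underlying function of the translocation `φ(i,j)` (0-indexed). -/
def tf (i j k : ℕ) : ℕ :=
  if i ≤ j then (if k < i ∨ j < k then k else if k = j then i else k + 1)
  else (if k < j ∨ i < k then k else if k = j then i else k - 1)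

theorem tf_lt {n i j k : ℕ} (hi : i < n) (hj : j < n) (hk : k < n) : tf i j k < n := by
  unfold tf; split_ifs <;> omega

theorem tf_tf (i j k : ℕ) : tf j i (tf i j k) = k := by
  unfold tf; split_ifs <;> omega

/-- The translocation `φ(i,j)` as a permutation of `Fin n`: it deletes the entry in
position `i` and reinserts it at position `j`, shifting intermediate entries. -/
def transloc {n : ℕ} (i j : Fin n) : Equiv.Perm (Fin n) where
  toFun k := ⟨tf i.val j.val k.val, tf_lt i.isLt j.isLt k.isLt⟩
  invFun k := ⟨tf j.val i.val k.val, tf_lt j.isLt i.isLt k.isLt⟩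
  left_inv k := Fin.ext (tf_tf i.val j.val k.val)
  right_inv k := Fin.ext (tf_tf j.val i.val k.val)

/-- `IsTransloc φ` : `φ` is a translocation. -/
def IsTransloc {n : ℕ} (φ : Equiv.Perm (Fin n)) : Prop := ∃ i j : Fin n, φ = transloc i j

/-- Length of the longest common subsequence of two `n`-length sequences. -/
noncomputable def lcsLen {n : ℕ} {α : Type*} (u v : Fin n → α) : ℕ :=
  sSup {k | ∃ f g : Fin k → Fin n, StrictMono f ∧ StrictMono g ∧ ∀ p, u (f p) = v (g p)}

/-- The Ulam distance `d(σ,π) = n - ℓ(σ,π)`. -/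
noncomputable def ulamDist {n : ℕ} (σ π : Equiv.Perm (Fin n)) : ℕ :=
  n - lcsLen (⇑σ) (⇑π)

/-- The `r`-regular multipermutation `m_σ^r` (with values in `[1, n/r]`). -/
def mult {n : ℕ} (r : ℕ) (σ : Equiv.Perm (Fin n)) : Fin n → ℕ :=
  fun i => (σ i).val / r + 1

/-- The `r`-regular Ulam distance, expressed as `n - ℓ(m_σ^r, m_π^r)`. -/
noncomputable def multDist {n : ℕ} (r : ℕ) (σ π : Equiv.Perm (Fin n)) : ℕ :=
  n - lcsLen (mult r σ) (mult r π)

/-- The `r`-regular Ulam sphere of radius `t` centered at `m_σ^r`. -/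
def multSphere {n : ℕ} (r : ℕ) (σ : Equiv.Perm (Fin n)) (t : ℕ) : Set (Fin n → ℕ) :=
  {x | ∃ π : Equiv.Perm (Fin n), x = mult r π ∧ multDist r σ π ≤ t}


/-!
Every multipermutation `u = m_c^r` has at least `1 + (n - 1)(n/r - 1)` words at distance at most
one. For each position `p` and each of the `n/r - 1` letters `w ≠ u p`, move an occurrence of `w`
to `p`, from the right of `p` if there is one and from the left otherwise. Two moves from the right
are told apart by their first changed position, two moves from the left by their last one, and a
move from the right agrees with a move from the left only if the latter swaps two adjacent
entries; for each letter other than the last entry of `u` there is at most one such swap.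

The spheres around the codewords are disjoint, so they cover at least
`|C|_r (1 + (n - 1)(n/r - 1))` multipermutations. On the other hand there are at most
`n! / (r!)^{n/r}` multipermutations: they form the orbit of `m_e^r` under `S_n`, whose stabilizer
contains the permutations of each block of `r` consecutive positions.
-/

open Finset Equiv

lemma card_image_comp_mul_card_stabilizer {α β : Type*} [Fintype α] [DecidableEq α]
    [DecidableEq β] (f : α → β) :
    (univ.image fun σ : Perm α => f ∘ σ).card * Fintype.card {g : Perm α // f ∘ g = f} =
      (Fintype.card α).factorial := by
  rw [← Fintype.card_perm, ← card_univ (α := Perm α),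
    card_eq_sum_card_image (fun σ : Perm α => f ∘ σ) univ, ← smul_eq_mul, ← sum_const]
  refine sum_congr rfl fun x hx => ?_
  obtain ⟨σ₀, -, rfl⟩ := mem_image.1 hx
  rw [← Fintype.card_subtype]
  refine Fintype.card_congr (Equiv.subtypeEquiv (Equiv.mulRight σ₀) fun g => ?_)
  rw [Equiv.coe_mulRight, Perm.coe_mul, ← Function.comp_assoc]
  exact σ₀.surjective.injective_comp_right.eq_iff.symm

lemma card_mul_le_card_of_pairwiseDisjoint {ι β : Type*} [DecidableEq β] {s : Finset ι}
    {t : Finset β} {f : ι → Finset β} {k : ℕ} (hd : (s : Set ι).PairwiseDisjoint f)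
    (hsub : ∀ i ∈ s, f i ⊆ t) (hk : ∀ i ∈ s, k ≤ (f i).card) : s.card * k ≤ t.card :=
  calc s.card * k ≤ ∑ i ∈ s, (f i).card := by simpa using card_nsmul_le_sum s _ k hk
    _ = (s.biUnion f).card := (card_biUnion hd).symm
    _ ≤ t.card := card_le_card (biUnion_subset.2 hsub)

section Transloc
variable {n : ℕ}

@[simp] lemma transloc_apply_right (i j : Fin n) : transloc i j j = i := by
  ext; simp only [transloc, Equiv.coe_fn_mk, tf]; split_ifs <;> omega

lemma transloc_apply_of_lt {i j k : Fin n} (hi : k < i) (hj : k < j) : transloc i j k = k := by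
  rw [Fin.lt_def] at hi hj
  ext; simp only [transloc, Equiv.coe_fn_mk, tf]; split_ifs <;> omega

lemma transloc_apply_of_gt {i j k : Fin n} (hi : i < k) (hj : j < k) : transloc i j k = k := by
  rw [Fin.lt_def] at hi hj
  ext; simp only [transloc, Equiv.coe_fn_mk, tf]; split_ifs <;> omega

lemma val_transloc_apply_of_lt_of_le {i j k : Fin n} (hjk : j < k) (hki : k ≤ i) :
    (transloc i j k : ℕ) = k - 1 := by
  rw [Fin.lt_def] at hjk; rw [Fin.le_def] at hki
  simp only [transloc, Equiv.coe_fn_mk, tf]; split_ifs <;> omega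

/-- The common subsequence of `u` and `u ∘ transloc i j`: delete position `i` from the first
word and position `j` from the second. -/
lemma transloc_succAbove {m : ℕ} (i j : Fin (m + 1)) (p : Fin m) :
    transloc i j (j.succAbove p) = i.succAbove p := by
  have hval (q : Fin (m + 1)) :
      (q.succAbove p : ℕ) = if p.val < q.val then p.val else p.val + 1 := by
    unfold Fin.succAbove; split_ifs <;> simp_all [Fin.lt_def]
  ext
  simp only [transloc, Equiv.coe_fn_mk, tf, hval]
  split_ifs <;> omega

end Transloc

section CommonSubsequence
variable {n : ℕ} {α : Type*}

lemma le_lcsLen {k : ℕ} (u v : Fin n → α)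
    (h : ∃ f g : Fin k → Fin n, StrictMono f ∧ StrictMono g ∧ ∀ p, u (f p) = v (g p)) :
    k ≤ lcsLen u v :=
  le_csSup ⟨n, fun _ ⟨f, _, hf, _⟩ => by simpa using Fintype.card_le_of_injective f hf.injective⟩ h

lemma le_lcsLen_self (u : Fin n → α) : n ≤ lcsLen u u :=
  le_lcsLen u u ⟨id, id, strictMono_id, strictMono_id, fun _ => rfl⟩

lemma sub_one_le_lcsLen_comp_transloc (u : Fin n → α) (i j : Fin n) :
    n - 1 ≤ lcsLen u (u ∘ transloc i j) := by
  cases n with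
  | zero => exact i.elim0
  | succ m =>
    exact le_lcsLen _ _ ⟨i.succAbove, j.succAbove, Fin.strictMono_succAbove i,
      Fin.strictMono_succAbove j, fun p => by simp [transloc_succAbove]⟩

end CommonSubsequence

def translocBall {n : ℕ} {α : Type*} [DecidableEq α] (u : Fin n → α) : Finset (Fin n → α) :=
  insert u (univ.image fun ij : Fin n × Fin n => u ∘ transloc ij.1 ij.2)

section MoveLetter
variable {n : ℕ} {α : Type*}

abbrev OccursAfter (u : Fin n → α) (p : Fin n) (w : α) : Prop := ∃ j, p < j ∧ u j = w

lemma not_lt_of_not_occursAfter {u : Fin n → α} {e e' j : Fin n} {w : α} (hw : w ≠ u e)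
    (h : ¬OccursAfter u e w) (hj : (j : ℕ) + 1 = e') (huj : u j = w) : ¬e < e' := by
  intro hlt
  rcases (show e ≤ j by rw [Fin.le_def]; rw [Fin.lt_def] at hlt; omega).eq_or_lt with rfl | hej
  · exact hw huj.symm
  · exact h ⟨j, hej, huj⟩

variable [DecidableEq α] (u : Fin n → α)

noncomputable def moveTo (p : Fin n) (w : α) : Fin n → α :=
  if h : OccursAfter u p w then u ∘ transloc h.choose p
  else if h' : ∃ j, j < p ∧ u j = w then u ∘ transloc h'.choose p
  else u

def letterPairs : Finset (Σ _ : Fin n, α) :=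
  univ.sigma fun p => (univ.image u).erase (u p)

/-- A move from the right can coincide with a move from the left only if the latter is an
adjacent transposition, so dropping those makes `moveTo` injective. -/
def goodPairs : Finset (Σ _ : Fin n, α) :=
  (letterPairs u).filter fun b =>
    OccursAfter u b.1 b.2 ∨ ¬∃ j : Fin n, (j : ℕ) + 1 = b.1 ∧ u j = b.2

variable {u}

lemma mem_letterPairs {b : Σ _ : Fin n, α} :
    b ∈ letterPairs u ↔ b.2 ≠ u b.1 ∧ ∃ j, u j = b.2 := by
  simp [letterPairs]

lemma moveTo_mem_translocBall (p : Fin n) (w : α) : moveTo u p w ∈ translocBall u := by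
  unfold moveTo translocBall
  split_ifs <;> simp

lemma moveTo_apply_self {p : Fin n} {w : α} (hw : w ≠ u p) (hmem : ∃ j, u j = w) :
    moveTo u p w p = w := by
  unfold moveTo
  split_ifs with h h'
  · simpa using h.choose_spec.2
  · simpa using h'.choose_spec.2
  · obtain ⟨j, rfl⟩ := hmem
    rcases lt_trichotomy j p with hjp | rfl | hpj
    · exact absurd ⟨j, hjp, rfl⟩ h'
    · exact absurd rfl hw
    · exact absurd ⟨j, hpj, rfl⟩ h

lemma moveTo_apply_of_lt {p k : Fin n} {w : α} (h : OccursAfter u p w) (hk : k < p) :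
    moveTo u p w k = u k := by
  rw [moveTo, dif_pos h, Function.comp_apply, transloc_apply_of_lt (hk.trans h.choose_spec.1) hk]

lemma moveTo_apply_of_gt {p k : Fin n} {w : α} (h : ¬OccursAfter u p w) (hk : p < k) :
    moveTo u p w k = u k := by
  rw [moveTo, dif_neg h]
  split_ifs with h'
  · rw [Function.comp_apply, transloc_apply_of_gt (h'.choose_spec.1.trans hk) hk]
  · rfl

lemma eq_of_moveTo_eq_of_occursAfter {p p' : Fin n} {w w' : α} (hw : w ≠ u p) (hw' : w' ≠ u p')
    (h : OccursAfter u p w) (h' : OccursAfter u p' w') (heq : moveTo u p w = moveTo u p' w') :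
    p = p' ∧ w = w' := by
  have self (p : Fin n) (w : α) (hw : w ≠ u p) (h : OccursAfter u p w) : moveTo u p w p = w :=
    moveTo_apply_self hw ⟨_, h.choose_spec.2⟩
  obtain rfl : p = p' := by
    by_contra hne
    rcases lt_or_gt_of_ne hne with hlt | hlt
    · exact hw (by rw [← self p w hw h, heq, moveTo_apply_of_lt h' hlt])
    · exact hw' (by rw [← self p' w' hw' h', ← heq, moveTo_apply_of_lt h hlt])
  exact ⟨rfl, by rw [← self p w hw h, heq, self p w' hw' h']⟩

lemma eq_of_moveTo_eq_of_not_occursAfter {p p' : Fin n} {w w' : α} (hw : w ≠ u p)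
    (hw' : w' ≠ u p') (hmem : ∃ j, u j = w) (hmem' : ∃ j, u j = w') (h : ¬OccursAfter u p w)
    (h' : ¬OccursAfter u p' w') (heq : moveTo u p w = moveTo u p' w') : p = p' ∧ w = w' := by
  obtain rfl : p = p' := by
    by_contra hne
    rcases lt_or_gt_of_ne hne with hlt | hlt
    · exact hw' (by rw [← moveTo_apply_self hw' hmem', ← heq, moveTo_apply_of_gt h hlt])
    · exact hw (by rw [← moveTo_apply_self hw hmem, heq, moveTo_apply_of_gt h' hlt])
  exact ⟨rfl, by rw [← moveTo_apply_self hw hmem, heq, moveTo_apply_self hw' hmem']⟩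

lemma exists_succ_eq_of_moveTo_eq {d e : Fin n} {w₁ w₂ : α} (hw₁ : w₁ ≠ u d) (hw₂ : w₂ ≠ u e)
    (hmem₂ : ∃ j, u j = w₂) (h₁ : OccursAfter u d w₁) (h₂ : ¬OccursAfter u e w₂)
    (heq : moveTo u d w₁ = moveTo u e w₂) : ∃ j : Fin n, (j : ℕ) + 1 = e ∧ u j = w₂ := by
  obtain ⟨hdi, hi⟩ := h₁.choose_spec
  have hx : moveTo u d w₁ = u ∘ transloc h₁.choose d := dif_pos h₁
  have hx₁ : moveTo u d w₁ d = w₁ := moveTo_apply_self hw₁ ⟨_, hi⟩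
  have hx₂ : moveTo u e w₂ e = w₂ := moveTo_apply_self hw₂ hmem₂
  have hde : d < e := by
    rcases lt_trichotomy d e with hde | rfl | hed
    · exact hde
    · exact absurd ⟨_, hdi, hi.trans (by rw [← hx₁, heq, hx₂])⟩ h₂
    · exact absurd (by rw [← hx₁, heq, moveTo_apply_of_gt h₂ hed]) hw₁
  have hei : e ≤ h₁.choose := by
    by_contra! hie
    exact hw₂ (by rw [← hx₂, ← heq, hx, Function.comp_apply, transloc_apply_of_gt hie hde])
  refine ⟨transloc h₁.choose d e, ?_, ?_⟩
  · rw [val_transloc_apply_of_lt_of_le hde hei]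
    have : (d : ℕ) < e := hde
    omega
  · rw [← hx₂, ← heq, hx]; rfl

variable (u)

lemma card_letterPairs : (letterPairs u).card = n * ((univ.image u).card - 1) := by
  rw [letterPairs, card_sigma,
    sum_congr rfl fun p _ => card_erase_of_mem (mem_image_of_mem u (mem_univ p))]
  simp

/-- Each dropped pair is determined by its letter, which is not the last letter of `u`. -/
lemma card_letterPairs_le_card_goodPairs_add :
    (letterPairs u).card ≤ (goodPairs u).card + ((univ.image u).card - 1) := by
  rcases Nat.eq_zero_or_pos n with rfl | hn
  · simp [letterPairs]
  rw [goodPairs, ← card_filter_add_card_filter_not (s := letterPairs u)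
    (fun b => OccursAfter u b.1 b.2 ∨ ¬∃ j : Fin n, (j : ℕ) + 1 = b.1 ∧ u j = b.2)]
  gcongr
  let last : Fin n := ⟨n - 1, by omega⟩
  calc _ ≤ ((univ.image u).erase (u last)).card := by
        refine card_le_card_of_injOn (fun b => b.2) ?_ ?_
        · rintro ⟨e, w⟩ hb
          simp only [coe_filter, Set.mem_ofPred_eq, mem_letterPairs, not_or, not_not] at hb
          obtain ⟨⟨hw, j, rfl⟩, h, -⟩ := hb
          refine mem_erase.2 ⟨fun hlast => ?_, mem_image_of_mem u (mem_univ j)⟩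
          rcases (show e ≤ last by rw [Fin.le_def]; simp only [last]; omega).eq_or_lt with rfl | hlt
          · exact hw hlast
          · exact h ⟨last, hlt, hlast.symm⟩
        · rintro ⟨e, w⟩ hb ⟨e', w'⟩ hb' (rfl : w = w')
          simp only [coe_filter, Set.mem_ofPred_eq, mem_letterPairs, not_or, not_not] at hb hb'
          obtain ⟨⟨hw, -⟩, h, j, hj, huj⟩ := hb
          obtain ⟨⟨hw', -⟩, h', j', hj', huj'⟩ := hb'
          obtain rfl : e = e' := le_antisymm (not_lt.1 (not_lt_of_not_occursAfter hw' h' hj huj))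
            (not_lt.1 (not_lt_of_not_occursAfter hw h hj' huj'))
          rfl
    _ = (univ.image u).card - 1 := card_erase_of_mem (mem_image_of_mem u (mem_univ last))

lemma moveTo_injOn_goodPairs :
    Set.InjOn (fun b : Σ _ : Fin n, α => moveTo u b.1 b.2) (goodPairs u) := by
  rintro ⟨p, w⟩ hb ⟨p', w'⟩ hb' heq
  simp only [goodPairs, coe_filter, Set.mem_ofPred_eq, mem_letterPairs] at hb hb' heq
  obtain ⟨⟨hw, hmem⟩, hgood⟩ := hb
  obtain ⟨⟨hw', hmem'⟩, hgood'⟩ := hb'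
  suffices p = p' ∧ w = w' by obtain ⟨rfl, rfl⟩ := this; rfl
  by_cases h : OccursAfter u p w <;> by_cases h' : OccursAfter u p' w'
  · exact eq_of_moveTo_eq_of_occursAfter hw hw' h h' heq
  · exact absurd (exists_succ_eq_of_moveTo_eq hw hw' hmem' h h' heq) (hgood'.resolve_left h')
  · exact absurd (exists_succ_eq_of_moveTo_eq hw' hw hmem h' h heq.symm) (hgood.resolve_left h)
  · exact eq_of_moveTo_eq_of_not_occursAfter hw hw' hmem hmem' h h' heq

lemma le_card_translocBall :
    1 + (n - 1) * ((univ.image u).card - 1) ≤ (translocBall u).card := by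
  set moves := (goodPairs u).image fun b => moveTo u b.1 b.2
  have hnot : u ∉ moves := by
    simp only [moves, mem_image, not_exists, not_and]
    rintro ⟨p, w⟩ hb heq
    obtain ⟨hw, hmem⟩ := mem_letterPairs.1 (mem_filter.1 hb).1
    exact hw (by rw [← moveTo_apply_self hw hmem, heq])
  have hsub : insert u moves ⊆ translocBall u :=
    insert_subset (mem_insert_self _ _) (image_subset_iff.2 fun b _ => moveTo_mem_translocBall _ _)
  calc 1 + (n - 1) * ((univ.image u).card - 1) ≤ 1 + (goodPairs u).card := by
        have := card_letterPairs_le_card_goodPairs_add u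
        rw [card_letterPairs] at this
        rw [Nat.sub_one_mul]
        omega
    _ = (insert u moves).card := by
        rw [card_insert_of_notMem hnot, card_image_of_injOn (moveTo_injOn_goodPairs u), add_comm]
    _ ≤ (translocBall u).card := card_le_card hsub

end MoveLetter

section Multipermutation
variable {n : ℕ}

lemma mult_eq_comp (r : ℕ) (σ : Perm (Fin n)) : mult r σ = mult r 1 ∘ σ := rfl

lemma mult_mul (r : ℕ) (σ τ : Perm (Fin n)) : mult r (σ * τ) = mult r σ ∘ τ := rfl

lemma mult_mem_multSphere (r : ℕ) (c : Perm (Fin n)) (t : ℕ) : mult r c ∈ multSphere r c t :=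
  ⟨c, rfl, by have := le_lcsLen_self (mult r c); unfold multDist; omega⟩

lemma mult_comp_transloc_mem_multSphere (r : ℕ) (c : Perm (Fin n)) (i j : Fin n) :
    mult r c ∘ transloc i j ∈ multSphere r c 1 :=
  ⟨c * transloc i j, rfl, by
    have := sub_one_le_lcsLen_comp_transloc (mult r c) i j
    rw [multDist, mult_mul]
    omega⟩

lemma translocBall_mult_subset_multSphere (r : ℕ) (c : Perm (Fin n)) :
    ↑(translocBall (mult r c)) ⊆ multSphere r c 1 := by
  simp only [translocBall, coe_insert, coe_image, Set.insert_subset_iff, Set.image_subset_iff]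
  exact ⟨mult_mem_multSphere r c 1, fun ij _ => mult_comp_transloc_mem_multSphere r c ij.1 ij.2⟩

lemma translocBall_mult_subset_image_mult (r : ℕ) (c : Perm (Fin n)) :
    translocBall (mult r c) ⊆ univ.image (mult r : Perm (Fin n) → Fin n → ℕ) := fun _ hx => by
  obtain ⟨π, rfl, -⟩ := translocBall_mult_subset_multSphere r c hx
  exact mem_image_of_mem _ (mem_univ π)

lemma exists_mult_one_apply_eq {r w t : ℕ} (hw : w ∈ Icc 1 (n / r)) (ht : t < r) :
    ∃ h : (w - 1) * r + t < n, mult r 1 ⟨_, h⟩ = w := by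
  obtain ⟨hw1, hwq⟩ := mem_Icc.1 hw
  have hlt : (w - 1) * r + t < w * r :=
    calc (w - 1) * r + t < (w - 1) * r + r := by omega
      _ = w * r := by rw [← add_one_mul, Nat.sub_add_cancel hw1]
  refine ⟨hlt.trans_le ((Nat.mul_le_mul_right r hwq).trans (Nat.div_mul_le_self n r)), ?_⟩
  have hdiv : ((w - 1) * r + t) / r = w - 1 :=
    Nat.div_eq_of_lt_le (Nat.le_add_right _ _) (by rwa [Nat.sub_add_cancel hw1])
  simp only [mult, Perm.one_apply, hdiv]
  omega

lemma Icc_subset_image_mult (r : ℕ) (σ : Perm (Fin n)) :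
    Icc 1 (n / r) ⊆ univ.image (mult r σ) := by
  intro w hw
  obtain ⟨h, hmult⟩ :=
    exists_mult_one_apply_eq hw (t := 0) (Nat.pos_of_ne_zero fun hr => by simp [hr] at hw)
  refine mem_image.2 ⟨σ.symm ⟨_, h⟩, mem_univ _, ?_⟩
  rw [mult_eq_comp, Function.comp_apply, σ.apply_symm_apply, hmult]

lemma le_card_translocBall_mult (r : ℕ) (c : Perm (Fin n)) :
    1 + (n - 1) * (n / r - 1) ≤ (translocBall (mult r c)).card := by
  refine le_trans ?_ (le_card_translocBall (mult r c))
  have := card_le_card (Icc_subset_image_mult r c)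
  rw [Nat.card_Icc] at this
  gcongr
  omega

lemma le_card_fiber_mult_one {r i : ℕ} (hi : i ∈ Icc 1 (n / r)) :
    r ≤ Fintype.card {a : Fin n // mult r 1 a = i} := by
  simpa using Fintype.card_le_of_injective
    (fun t : Fin r => (⟨⟨_, (exists_mult_one_apply_eq hi t.isLt).1⟩,
      (exists_mult_one_apply_eq hi t.isLt).2⟩ : {a : Fin n // mult r 1 a = i}))
    fun t t' h => Fin.ext (by simpa using congrArg (fun a => (a.1 : ℕ)) h)

lemma pow_factorial_le_card_stabilizer_mult_one (r : ℕ) :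
    r.factorial ^ (n / r) ≤ Fintype.card {g : Perm (Fin n) // mult r 1 ∘ g = mult r 1} := by
  rw [DomMulAct.stabilizer_card']
  calc r.factorial ^ (n / r) = ∏ _i ∈ Icc 1 (n / r), r.factorial := by simp
    _ ≤ ∏ i ∈ Icc 1 (n / r), (Fintype.card {a // mult r 1 a = i}).factorial :=
        prod_le_prod' fun i hi => Nat.factorial_le (le_card_fiber_mult_one hi)
    _ ≤ ∏ i ∈ univ.image (mult r 1), (Fintype.card {a // mult r 1 a = i}).factorial :=
        prod_le_prod_of_subset_of_one_le' (Icc_subset_image_mult r 1)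
          fun i _ _ => Nat.one_le_iff_ne_zero.2 (Nat.factorial_ne_zero _)

lemma card_image_mult_mul_le (r : ℕ) :
    (univ.image (mult r : Perm (Fin n) → Fin n → ℕ)).card * r.factorial ^ (n / r) ≤
      n.factorial :=
  calc _ ≤ (univ.image fun σ : Perm (Fin n) => mult r 1 ∘ σ).card *
        Fintype.card {g : Perm (Fin n) // mult r 1 ∘ g = mult r 1} :=
        Nat.mul_le_mul_left _ (pow_factorial_le_card_stabilizer_mult_one r)
    _ = n.factorial := by rw [card_image_comp_mul_card_stabilizer, Fintype.card_fin]

lemma card_image_mult_mul_le_of_disjoint {r : ℕ} (C : Finset (Perm (Fin n)))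
    (hsep : ∀ c ∈ C, ∀ c' ∈ C, mult r c ≠ mult r c' →
      Disjoint (multSphere r c 1) (multSphere r c' 1)) :
    (C.image (mult r)).card * (1 + (n - 1) * (n / r - 1)) ≤
      (univ.image (mult r : Perm (Fin n) → Fin n → ℕ)).card := by
  refine card_mul_le_card_of_pairwiseDisjoint (f := translocBall) ?_ ?_ ?_
  · intro x hx y hy hxy
    obtain ⟨c, hc, rfl⟩ := mem_image.1 hx
    obtain ⟨c', hc', rfl⟩ := mem_image.1 hy
    exact disjoint_coe.1 ((hsep c hc c' hc' hxy).mono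
      (translocBall_mult_subset_multSphere r c) (translocBall_mult_subset_multSphere r c'))
  · rintro _ hx
    obtain ⟨c, -, rfl⟩ := mem_image.1 hx
    exact translocBall_mult_subset_image_mult r c
  · rintro _ hx
    obtain ⟨c, -, rfl⟩ := mem_image.1 hx
    exact le_card_translocBall_mult r c

end Multipermutation

theorem sphere_packing_bound_general {n r : ℕ}
    (C : Set (Equiv.Perm (Fin n)))
    (hsep : ∀ c ∈ C, ∀ c' ∈ C, mult r c ≠ mult r c' →
      Disjoint (multSphere r c 1) (multSphere r c' 1)) :
    {x : Fin n → ℕ | ∃ c ∈ C, x = mult r c}.ncard ≤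
      n.factorial / (r.factorial ^ (n / r) * (1 + (n - 1) * (n / r - 1))) := by
  classical
  have hcard :
      {x : Fin n → ℕ | ∃ c ∈ C, x = mult r c}.ncard = (C.toFinset.image (mult r)).card := by
    rw [← Set.ncard_coe_finset]
    congr
    ext x
    simp [eq_comm]
  have hpack := card_image_mult_mul_le_of_disjoint (r := r) C.toFinset (by simpa using hsep)
  rw [hcard, Nat.le_div_iff_mul_le (by positivity)]
  calc _ = (C.toFinset.image (mult r)).card * (1 + (n - 1) * (n / r - 1)) *
        r.factorial ^ (n / r) := by ring
    _ ≤ (univ.image (mult r : Perm (Fin n) → Fin n → ℕ)).card * r.factorial ^ (n / r) :=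
        Nat.mul_le_mul_right _ hpack
    _ ≤ n.factorial := card_image_mult_mul_le r

/-- Sphere-packing bound for single-error correcting `r`-regular multipermutation
codes: `|C|_r ≤ n! / ((r!)^{n/r} · (1 + (n−1)(n/r − 1)))`. -/
theorem sphere_packing_bound {n r : ℕ} (hr : 0 < r) (hdvd : r ∣ n)
    (C : Set (Equiv.Perm (Fin n)))
    (hclosed : ∀ c ∈ C, ∀ σ : Equiv.Perm (Fin n), mult r σ = mult r c → σ ∈ C)
    (hsep : ∀ c ∈ C, ∀ c' ∈ C, mult r c ≠ mult r c' →
      Disjoint (multSphere r c 1) (multSphere r c' 1)) :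
    {x : Fin n → ℕ | ∃ c ∈ C, x = mult r c}.ncard ≤
      n.factorial / (r.factorial ^ (n / r) * (1 + (n - 1) * (n / r - 1))) :=
  sphere_packing_bound_general C hsep

end UlamPaper
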